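/- arXiv:1406.2946 — 4 statements merged into one kernel-verified Lean document; each statement's English description precedes it below -/
import Mathlib

section
/- Rains' overlap lemma: if τ ∈ PPT'(A:B) and Φ is a maximally entangled state of Schmidt rank M on H_A ⊗ H_B, then Tr(Φ τ) ≤ 1/M. -/
open scoped Matrix Kronecker
open Matrix
open scoped ComplexOrder

noncomputable section

/-- The partial transpose on the second tensor factor (w.r.t. the standard basis). -/
def partialTranspose {A B : Type*} (M : Matrix (A × B) (A × B) ℂ) :
    Matrix (A × B) (A × B) ℂ :=
  Matrix.of fun p q => M (p.1, q.2) (q.1, p.2)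

/-- The trace norm (sum of singular values) of a complex matrix. -/
def traceNorm {n : Type*} [Fintype n] [DecidableEq n] (M : Matrix n n ℂ) : ℝ :=
  ∑ i, Real.sqrt ((Matrix.isHermitian_conjTranspose_mul_self M).eigenvalues i)

/-- The Rains set PPT'(A:B) of subnormalized-after-partial-transpose positive operators. -/
def PPTprime (A B : Type*) [Fintype A] [Fintype B] [DecidableEq A] [DecidableEq B] :
    Set (Matrix (A × B) (A × B) ℂ) :=
  {τ | τ.PosSemidef ∧ traceNorm (partialTranspose τ) ≤ 1}

/-- Apply a real function to a Hermitian matrix via its spectral decomposition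
(junk value `0` on non-Hermitian input). -/
def matFun {n : Type*} [Fintype n] [DecidableEq n] (f : ℝ → ℝ) (M : Matrix n n ℂ) :
    Matrix n n ℂ :=
  if h : M.IsHermitian then
    (h.eigenvectorUnitary : Matrix n n ℂ) *
      Matrix.diagonal (fun i => (f (h.eigenvalues i) : ℂ)) *
      (h.eigenvectorUnitary : Matrix n n ℂ)ᴴ
  else 0

/-- The quantum relative entropy `D(ρ‖σ) = Tr ρ (log ρ − log σ)` (base 2). -/
def relEntropy {n : Type*} [Fintype n] [DecidableEq n] (ρ σ : Matrix n n ℂ) : ℝ :=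
  ((ρ * (matFun (Real.logb 2) ρ - matFun (Real.logb 2) σ)).trace).re

/-- `Tr{M^α}` for a Hermitian matrix, via eigenvalues (junk `0` otherwise). -/
def traceRpow {n : Type*} [Fintype n] [DecidableEq n] (M : Matrix n n ℂ) (α : ℝ) : ℝ :=
  if h : M.IsHermitian then ∑ i, (h.eigenvalues i) ^ α else 0

/-- The sandwiched Rényi relative entropy of order α (base 2). -/
def sandRenyi {n : Type*} [Fintype n] [DecidableEq n] (α : ℝ) (ρ σ : Matrix n n ℂ) : ℝ :=
  (α - 1)⁻¹ * Real.logb 2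
    (traceRpow (matFun (fun x => x ^ ((1 - α) / (2 * α))) σ * ρ *
        matFun (fun x => x ^ ((1 - α) / (2 * α))) σ) α)

/-- The extension `id_R ⊗ N` of a (linear) map on matrices to a reference system `R`. -/
def chanExt {A B R : Type*} (N : Matrix A A ℂ → Matrix B B ℂ)
    (M : Matrix (R × A) (R × A) ℂ) : Matrix (R × B) (R × B) ℂ :=
  Matrix.of fun p q => N (Matrix.of fun a a' => M (p.1, a) (q.1, a')) p.2 q.2

/-- Linearity of a map on matrices. -/
def IsLinearMatMap {A B : Type*} (N : Matrix A A ℂ → Matrix B B ℂ) : Prop :=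
  ∀ (c : ℂ) (M M' : Matrix A A ℂ), N (c • M + M') = c • N M + N M'

/-- Complete positivity: every extension by a reference system preserves positivity. -/
def IsCompletelyPositive {A B : Type*} [Fintype A] [Fintype B] (N : Matrix A A ℂ → Matrix B B ℂ) : Prop :=
  ∀ (R : Type) [Fintype R] [DecidableEq R],
    ∀ M : Matrix (R × A) (R × A) ℂ, M.PosSemidef → (chanExt N M).PosSemidef

/-- Trace preservation. -/
def IsTracePreserving {A B : Type*} [Fintype A] [Fintype B]
    (N : Matrix A A ℂ → Matrix B B ℂ) : Prop :=
  ∀ M, (N M).trace = M.trace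

/-- A quantum channel: a linear, completely positive, trace-preserving map. -/
def IsChannel {A B : Type*} [Fintype A] [Fintype B]
    (N : Matrix A A ℂ → Matrix B B ℂ) : Prop :=
  IsLinearMatMap N ∧ IsCompletelyPositive N ∧ IsTracePreserving N

/-- A density operator. -/
def IsDensity {n : Type*} [Fintype n] (ρ : Matrix n n ℂ) : Prop :=
  ρ.PosSemidef ∧ ρ.trace = 1

/-- The Rains relative entropy of a bipartite state. -/
def RainsRel {A B : Type*} [Fintype A] [Fintype B] [DecidableEq A] [DecidableEq B]
    (ρ : Matrix (A × B) (A × B) ℂ) : ℝ :=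
  ⨅ τ : (PPTprime A B), relEntropy ρ τ.1

/-- The Rains information of a channel (reference system of input dimension). -/
def RainsChan {A B : Type*} [Fintype A] [Fintype B] [DecidableEq A] [DecidableEq B]
    (N : Matrix A A ℂ → Matrix B B ℂ) : ℝ :=
  ⨆ ρ : {ρ : Matrix (A × A) (A × A) ℂ // IsDensity ρ},
    ⨅ τ : (PPTprime A B), relEntropy (chanExt N ρ.1) τ.1

/-- The sandwiched Rényi Rains information of a channel. -/
def RainsRenyiChan {A B : Type*} [Fintype A] [Fintype B] [DecidableEq A] [DecidableEq B]
    (α : ℝ) (N : Matrix A A ℂ → Matrix B B ℂ) : ℝ :=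
  ⨆ ρ : {ρ : Matrix (A × A) (A × A) ℂ // IsDensity ρ},
    ⨅ τ : (PPTprime A B), sandRenyi α (chanExt N ρ.1) τ.1

/-- The `n`-fold tensor power of a linear map on matrices. -/
def tpow {A B : Type*} [Fintype A] [DecidableEq A] (N : Matrix A A ℂ → Matrix B B ℂ)
    (n : ℕ) (M : Matrix (Fin n → A) (Fin n → A) ℂ) : Matrix (Fin n → B) (Fin n → B) ℂ :=
  Matrix.of fun f g => ∑ f' : Fin n → A, ∑ g' : Fin n → A,
    M f' g' * ∏ i, N (Matrix.single (f' i) (g' i) 1) (f i) (g i)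

end

/-- The rank-`M` maximally entangled state built from orthonormal (standard basis)
families indexed by injections `ιA`, `ιB`. -/
noncomputable def maxEnt {A B : Type*} [Fintype A] [Fintype B] [DecidableEq A] [DecidableEq B]
    (M : ℕ) (ιA : Fin M → A) (ιB : Fin M → B) : Matrix (A × B) (A × B) ℂ :=
  Matrix.of fun p q =>
    (M : ℂ)⁻¹ * (∑ i, if p = (ιA i, ιB i) then (1 : ℂ) else 0) *
      (∑ j, if q = (ιA j, ιB j) then (1 : ℂ) else 0)

/-!
Unwinding the partial transpose, `Tr(Φ τ) = M⁻¹ ∑_{i,j} T_B(τ)_{(i,j),(j,i)}`: the pairing of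
`T_B(τ)` with a partial permutation matrix, which has operator norm at most `1`. Such a pairing is
bounded by the trace norm: expanding `σ = ∑ᵢ (σ vᵢ) vᵢ*` along an eigenbasis `vᵢ` of `σᴴ σ`, the
`i`-th term contributes at most `‖σ vᵢ‖ ‖vᵢ‖ = √λᵢ` by Cauchy–Schwarz.
-/
theorem sum_comp_le_sum_of_injective {κ n N : Type*} [Fintype κ] [Fintype n]
    [AddCommMonoid N] [PartialOrder N] [IsOrderedAddMonoid N]
    {r : κ → n} (hr : Function.Injective r) {f : n → N} (hf : ∀ a, 0 ≤ f a) :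
    ∑ k, f (r k) ≤ ∑ a, f a := by
  classical
  rw [← Finset.sum_image fun _ _ _ _ h => hr h]
  exact Finset.sum_le_univ_sum_of_nonneg hf

theorem re_sum_mul_star_le_sqrt_mul_sqrt {κ n : Type*} [Fintype κ] [Fintype n]
    {r c : κ → n} (hr : Function.Injective r) (hc : Function.Injective c) (x y : n → ℂ) :
    (∑ k, x (r k) * star (y (c k))).re ≤ √(∑ a, ‖x a‖ ^ 2) * √(∑ b, ‖y b‖ ^ 2) :=
  calc (∑ k, x (r k) * star (y (c k))).re
      ≤ ∑ k, ‖x (r k)‖ * ‖y (c k)‖ :=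
        (Complex.re_le_norm _).trans <| (norm_sum_le _ _).trans_eq <| by simp
    _ ≤ √(∑ k, ‖x (r k)‖ ^ 2) * √(∑ k, ‖y (c k)‖ ^ 2) := Real.sum_mul_le_sqrt_mul_sqrt _ _ _
    _ ≤ √(∑ a, ‖x a‖ ^ 2) * √(∑ b, ‖y b‖ ^ 2) := by
        gcongr
        · exact sum_comp_le_sum_of_injective hr fun a => sq_nonneg ‖x a‖
        · exact sum_comp_le_sum_of_injective hc fun b => sq_nonneg ‖y b‖

namespace Matrix.IsHermitian

variable {n : Type*} [Fintype n] [DecidableEq n] {A : Matrix n n ℂ}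

theorem apply_eq_sum_mulVec_eigenvectorBasis (hA : A.IsHermitian) (N : Matrix n n ℂ) (a b : n) :
    N a b = ∑ i, (N *ᵥ ⇑(hA.eigenvectorBasis i)) a * star (hA.eigenvectorBasis i b) := by
  let U : Matrix n n ℂ := hA.eigenvectorUnitary
  have hU : N = N * U * star U := by
    rw [mul_assoc, Unitary.mul_star_self_of_mem hA.eigenvectorUnitary.2, mul_one]
  conv_lhs => rw [hU]
  rfl

theorem sum_norm_sq_eigenvectorBasis_apply (hA : A.IsHermitian) (i : n) :
    ∑ b, ‖hA.eigenvectorBasis i b‖ ^ 2 = 1 := by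
  rw [← EuclideanSpace.norm_sq_eq, hA.eigenvectorBasis.orthonormal.1 i, one_pow]

end Matrix.IsHermitian

theorem Matrix.sum_norm_sq_mulVec_eigenvectorBasis {n : Type*} [Fintype n] [DecidableEq n]
    (N : Matrix n n ℂ) (i : n) :
    ∑ a, ‖(N *ᵥ ⇑((isHermitian_conjTranspose_mul_self N).eigenvectorBasis i)) a‖ ^ 2 =
      (isHermitian_conjTranspose_mul_self N).eigenvalues i := by
  rw [IsHermitian.eigenvalues_eq, ← mulVec_mulVec, dotProduct_mulVec, ← star_mulVec]
  simp only [dotProduct, Pi.star_apply, Complex.star_def, Complex.conj_mul']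
  norm_cast

theorem re_sum_apply_le_traceNorm {κ n : Type*} [Fintype κ] [Fintype n] [DecidableEq n]
    (σ : Matrix n n ℂ) {r c : κ → n} (hr : Function.Injective r) (hc : Function.Injective c) :
    (∑ k, σ (r k) (c k)).re ≤ traceNorm σ := by
  set h := isHermitian_conjTranspose_mul_self σ
  set v := h.eigenvectorBasis
  calc (∑ k, σ (r k) (c k)).re
      = ∑ i, (∑ k, (σ *ᵥ ⇑(v i)) (r k) * star (v i (c k))).re := by
        simp_rw [h.apply_eq_sum_mulVec_eigenvectorBasis σ]
        rw [Finset.sum_comm, Complex.re_sum]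
    _ ≤ ∑ i, √(h.eigenvalues i) * √1 := Finset.sum_le_sum fun i _ =>
        (re_sum_mul_star_le_sqrt_mul_sqrt hr hc _ _).trans_eq <| by
          rw [sum_norm_sq_mulVec_eigenvectorBasis, h.sum_norm_sq_eigenvectorBasis_apply]
    _ = traceNorm σ := by simp [traceNorm]

theorem sum_sum_boole_mul_eq_sum_comp {ι γ R : Type*} [Fintype ι] [Fintype γ] [DecidableEq γ]
    [NonAssocSemiring R] (P : ι → γ) (g : γ → R) :
    ∑ p, (∑ i, if p = P i then (1 : R) else 0) * g p = ∑ i, g (P i) := by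
  simp_rw [Finset.sum_mul, ite_mul, one_mul, zero_mul]
  rw [Finset.sum_comm]
  simp

theorem trace_maxEnt_mul {A B : Type*} [Fintype A] [Fintype B] [DecidableEq A] [DecidableEq B]
    (M : ℕ) (ιA : Fin M → A) (ιB : Fin M → B) (τ : Matrix (A × B) (A × B) ℂ) :
    (maxEnt M ιA ιB * τ).trace =
      (M : ℂ)⁻¹ * ∑ k : Fin M × Fin M, partialTranspose τ (ιA k.2, ιB k.1) (ιA k.1, ιB k.2) := by
  let P i := (ιA i, ιB i)
  calc (maxEnt M ιA ιB * τ).trace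
      = (M : ℂ)⁻¹ * ∑ p, (∑ i, if p = P i then (1 : ℂ) else 0) *
          ∑ q, (∑ j, if q = P j then (1 : ℂ) else 0) * τ q p := by
        simp only [trace, diag_apply, mul_apply, Finset.mul_sum]
        refine Finset.sum_congr rfl fun p _ => Finset.sum_congr rfl fun q _ => ?_
        simp only [maxEnt, of_apply]
        ring
    _ = (M : ℂ)⁻¹ * ∑ i, ∑ j, τ (P j) (P i) := by
        simp only [sum_sum_boole_mul_eq_sum_comp]
    _ = _ := by rw [Fintype.sum_prod_type]; rfl

theorem overlap_le_inv_schmidt_rank_general {A B : Type*} [Fintype A] [Fintype B]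
    [DecidableEq A] [DecidableEq B] (M : ℕ)
    (ιA : Fin M → A) (ιB : Fin M → B)
    (hιA : Function.Injective ιA) (hιB : Function.Injective ιB)
    (τ : Matrix (A × B) (A × B) ℂ) (hτ : τ ∈ PPTprime A B) :
    ((maxEnt M ιA ιB * τ).trace).re ≤ 1 / M := by
  have hι := hιA.prodMap hιB
  have hswap_le_one := (re_sum_apply_le_traceNorm (partialTranspose τ)
    (hι.comp Prod.swap_injective) hι).trans hτ.2
  rw [trace_maxEnt_mul, ← Complex.ofReal_natCast, ← Complex.ofReal_inv, Complex.re_ofReal_mul,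
    one_div]
  exact mul_le_of_le_one_right (by positivity) hswap_le_one

/-- Rains' overlap lemma. -/
theorem overlap_le_inv_schmidt_rank {A B : Type*} [Fintype A] [Fintype B]
    [DecidableEq A] [DecidableEq B] (M : ℕ) (hM : 0 < M)
    (ιA : Fin M → A) (ιB : Fin M → B)
    (hιA : Function.Injective ιA) (hιB : Function.Injective ιB)
    (τ : Matrix (A × B) (A × B) ℂ) (hτ : τ ∈ PPTprime A B) :
    ((maxEnt M ιA ιB * τ).trace).re ≤ 1 / M :=
  overlap_le_inv_schmidt_rank_general M ιA ιB hιA hιB τ hτ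
end

section
/- A separable state has positive partial transpose: if ρ = Σ_x p(x) ρ_A^x ⊗ ρ_B^x is a convex combination of product density operators, then T_B(ρ) ≥ 0. -/
open scoped Matrix Kronecker
open Matrix
open scoped ComplexOrder

section PartialTranspose

variable {A B : Type*}

theorem partialTranspose_kronecker (M : Matrix A A ℂ) (N : Matrix B B ℂ) :
    partialTranspose (M ⊗ₖ N) = M ⊗ₖ Nᵀ := by
  ext ⟨a, b⟩ ⟨a', b'⟩
  rfl

theorem partialTranspose_smul (c : ℂ) (M : Matrix (A × B) (A × B) ℂ) :
    partialTranspose (c • M) = c • partialTranspose M :=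
  rfl

theorem partialTranspose_sum {X : Type*} (s : Finset X) (M : X → Matrix (A × B) (A × B) ℂ) :
    partialTranspose (∑ x ∈ s, M x) = ∑ x ∈ s, partialTranspose (M x) := by
  ext p q
  simp only [partialTranspose, of_apply, Matrix.sum_apply]

theorem Matrix.PosSemidef.partialTranspose_kronecker [Finite A] [Finite B]
    {M : Matrix A A ℂ} {N : Matrix B B ℂ}
    (hM : M.PosSemidef) (hN : N.PosSemidef) : (partialTranspose (M ⊗ₖ N)).PosSemidef := by
  rw [_root_.partialTranspose_kronecker]
  exact hM.kronecker hN.transpose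

end PartialTranspose

theorem separable_posSemidef_partialTranspose_general {A B X : Type*} [Fintype A] [Fintype B]
    [Fintype X] (p : X → ℝ) (hp : ∀ x, 0 ≤ p x)
    (ρA : X → Matrix A A ℂ) (ρB : X → Matrix B B ℂ)
    (hρA : ∀ x, IsDensity (ρA x)) (hρB : ∀ x, IsDensity (ρB x)) :
    (partialTranspose (∑ x, (p x : ℂ) • (ρA x ⊗ₖ ρB x))).PosSemidef := by
  rw [partialTranspose_sum]
  refine posSemidef_sum _ fun x _ => ?_
  rw [partialTranspose_smul]
  exact ((hρA x).1.partialTranspose_kronecker (hρB x).1).smul (by exact_mod_cast hp x)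

/-- a separable state has positive partial transpose. -/
theorem separable_posSemidef_partialTranspose {A B X : Type*} [Fintype A] [Fintype B]
    [Fintype X] (p : X → ℝ) (hp : ∀ x, 0 ≤ p x) (hp1 : ∑ x, p x = 1)
    (ρA : X → Matrix A A ℂ) (ρB : X → Matrix B B ℂ)
    (hρA : ∀ x, IsDensity (ρA x)) (hρB : ∀ x, IsDensity (ρB x)) :
    (partialTranspose (∑ x, (p x : ℂ) • (ρA x ⊗ₖ ρB x))).PosSemidef :=
  separable_posSemidef_partialTranspose_general p hp ρA ρB hρA hρB
end

section
/- Operator monotonicity bound for the sandwiched Rényi relative entropy: let α > 1, let ρ, ρ' be density operators and σ a positive definite operator on a finite-dimensional Hilbert space, and suppose ρ ≤ γ ρ' for some γ ≥ 1. Then D̃_α(ρ‖σ) ≤ (α/(α−1)) log γ + D̃_α(ρ'‖σ). -/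
open scoped Matrix Kronecker
open Matrix
open scoped ComplexOrder

/-!
Conjugation by `σ^{(1-α)/2α}` preserves the Loewner order, so `ρ ≤ γ ρ'` passes to the sandwiched
operators: `A ≤ γ A'`. By Weyl's monotonicity principle the decreasingly ordered eigenvalues of `A`
are dominated by those of `γ A'`: a nonzero vector in the span of the top `k + 1` eigenvectors of
one operator and of the bottom `n - k` eigenvectors of the other exists by a dimension count, and
its Rayleigh quotient is squeezed between the two `k`-th eigenvalues. Hence `Tr A^α ≤ Tr (γ A')^α
= γ^α Tr A'^α`, and taking `logb 2` and dividing by `α - 1 > 0` gives the bound.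
-/

open Module Submodule RCLike
open scoped InnerProductSpace

namespace OrthonormalBasis

variable {ι 𝕜 E : Type*} [Fintype ι] [RCLike 𝕜] [NormedAddCommGroup E] [InnerProductSpace 𝕜 E]

theorem finrank_span_image (b : OrthonormalBasis ι 𝕜 E) (s : Finset ι) :
    finrank 𝕜 (span 𝕜 (b '' s)) = s.card := by
  have hb := b.orthonormal.linearIndependent.comp ((↑) : s → ι) Subtype.val_injective
  rw [Set.image_eq_range, ← Fintype.card_coe]
  exact finrank_span_eq_card hb

theorem inner_eq_zero_of_mem_span_image (b : OrthonormalBasis ι 𝕜 E) {s : Set ι} {x : E}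
    (hx : x ∈ span 𝕜 (b '' s)) {i : ι} (hi : i ∉ s) : ⟪b i, x⟫_𝕜 = 0 := by
  rw [← b.coe_toBasis, b.toBasis.mem_span_image] at hx
  by_contra h
  exact hi (hx (by simpa [b.coe_toBasis_repr_apply, b.repr_apply_apply] using h))

end OrthonormalBasis

namespace LinearMap.IsSymmetric

variable {𝕜 E : Type*} [RCLike 𝕜] [NormedAddCommGroup E] [InnerProductSpace 𝕜 E]
  [FiniteDimensional 𝕜 E] {n : ℕ} (hn : finrank 𝕜 E = n) {T : E →ₗ[𝕜] E} (hT : T.IsSymmetric)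

theorem re_inner_map_self_eq_sum (x : E) :
    re ⟪x, T x⟫_𝕜 = ∑ i, hT.eigenvalues hn i * ‖⟪hT.eigenvectorBasis hn i, x⟫_𝕜‖ ^ 2 := by
  set b := hT.eigenvectorBasis hn
  rw [← b.sum_inner_mul_inner, map_sum]
  refine Finset.sum_congr rfl fun i _ => ?_
  rw [← b.repr_apply_apply (T x), hT.eigenvectorBasis_apply_self_apply, b.repr_apply_apply,
    ← inner_conj_symm, mul_left_comm, RCLike.conj_mul, ← ofReal_pow, ← ofReal_mul, ofReal_re]

theorem mul_norm_sq_le_re_inner_map_self {s : Set (Fin n)} {t : ℝ}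
    (hs : ∀ i ∈ s, t ≤ hT.eigenvalues hn i) {x : E}
    (hx : x ∈ span 𝕜 (hT.eigenvectorBasis hn '' s)) :
    t * ‖x‖ ^ 2 ≤ re ⟪x, T x⟫_𝕜 := by
  rw [hT.re_inner_map_self_eq_sum hn, ← (hT.eigenvectorBasis hn).sum_sq_norm_inner_right,
    Finset.mul_sum]
  refine Finset.sum_le_sum fun i _ => ?_
  by_cases hi : i ∈ s
  · exact mul_le_mul_of_nonneg_right (hs i hi) (by positivity)
  · simp [(hT.eigenvectorBasis hn).inner_eq_zero_of_mem_span_image hx hi]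

theorem re_inner_map_self_le_mul_norm_sq {s : Set (Fin n)} {t : ℝ}
    (hs : ∀ i ∈ s, hT.eigenvalues hn i ≤ t) {x : E}
    (hx : x ∈ span 𝕜 (hT.eigenvectorBasis hn '' s)) :
    re ⟪x, T x⟫_𝕜 ≤ t * ‖x‖ ^ 2 := by
  rw [hT.re_inner_map_self_eq_sum hn, ← (hT.eigenvectorBasis hn).sum_sq_norm_inner_right,
    Finset.mul_sum]
  refine Finset.sum_le_sum fun i _ => ?_
  by_cases hi : i ∈ s
  · exact mul_le_mul_of_nonneg_right (hs i hi) (by positivity)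
  · simp [(hT.eigenvectorBasis hn).inner_eq_zero_of_mem_span_image hx hi]

theorem eigenvalues_le_eigenvalues {S : E →ₗ[𝕜] E} (hS : S.IsSymmetric) (hST : S ≤ T)
    (k : Fin n) : hS.eigenvalues hn k ≤ hT.eigenvalues hn k := by
  set V := span 𝕜 (hS.eigenvectorBasis hn '' (Finset.Iic k : Set (Fin n)))
  set W := span 𝕜 (hT.eigenvectorBasis hn '' (Finset.Ici k : Set (Fin n)))
  have hdim : finrank 𝕜 E < finrank 𝕜 V + finrank 𝕜 W := by
    rw [OrthonormalBasis.finrank_span_image, OrthonormalBasis.finrank_span_image, Fin.card_Iic,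
      Fin.card_Ici, hn]
    omega
  obtain ⟨x, hxV, hxW, hx0⟩ : ∃ x ∈ V, x ∈ W ∧ x ≠ 0 := by
    by_contra! h
    exact hdim.not_ge (finrank_add_finrank_le_of_disjoint (disjoint_def.mpr h))
  have hS_ge : hS.eigenvalues hn k * ‖x‖ ^ 2 ≤ re ⟪x, S x⟫_𝕜 :=
    hS.mul_norm_sq_le_re_inner_map_self hn
      (fun i hi => hS.eigenvalues_antitone hn (Finset.mem_Iic.mp hi)) hxV
  have hT_le : re ⟪x, T x⟫_𝕜 ≤ hT.eigenvalues hn k * ‖x‖ ^ 2 :=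
    hT.re_inner_map_self_le_mul_norm_sq hn
      (fun i hi => hT.eigenvalues_antitone hn (Finset.mem_Ici.mp hi)) hxW
  have hST_x : re ⟪x, S x⟫_𝕜 ≤ re ⟪x, T x⟫_𝕜 := by
    have := hST.re_inner_nonneg_right x
    rwa [sub_apply, inner_sub_right, map_sub, sub_nonneg] at this
  exact le_of_mul_le_mul_right (hS_ge.trans (hST_x.trans hT_le)) (by positivity)

end LinearMap.IsSymmetric

open scoped MatrixOrder

namespace Matrix

theorem PosSemidef.mul_mul_of_isSelfAdjoint {𝕜 n : Type*} [RCLike 𝕜] [Fintype n]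
    {M S : Matrix n n 𝕜} (hM : M.PosSemidef) (hS : IsSelfAdjoint S) : (S * M * S).PosSemidef :=
  nonneg_iff_posSemidef.mp (hS.conjugate_nonneg (nonneg_iff_posSemidef.mpr hM))

variable {𝕜 n : Type*} [RCLike 𝕜] [Fintype n] [DecidableEq n] {P Q M : Matrix n n 𝕜}

theorem IsHermitian.eigenvalues₀_le_eigenvalues₀ (hP : P.IsHermitian) (hQ : Q.IsHermitian)
    (hPQ : P ≤ Q) (k : Fin (Fintype.card n)) : hP.eigenvalues₀ k ≤ hQ.eigenvalues₀ k :=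
  LinearMap.IsSymmetric.eigenvalues_le_eigenvalues _ _ _
    (by rw [LinearMap.le_def, ← map_sub, isPositive_toEuclideanLin_iff]; exact hPQ) k

theorem IsHermitian.sum_comp_eigenvalues_le (hP : P.IsHermitian) (hQ : Q.IsHermitian)
    (hPQ : P ≤ Q) {f : ℝ → ℝ} (hf : Monotone f) :
    ∑ i, f (hP.eigenvalues i) ≤ ∑ i, f (hQ.eigenvalues i) := by
  simp only [IsHermitian.eigenvalues]
  rw [Equiv.sum_comp (Fintype.equivOfCardEq _).symm (fun k => f (hP.eigenvalues₀ k)),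
    Equiv.sum_comp (Fintype.equivOfCardEq _).symm (fun k => f (hQ.eigenvalues₀ k))]
  exact Finset.sum_le_sum fun k _ => hf (hP.eigenvalues₀_le_eigenvalues₀ hQ hPQ k)

theorem PosDef.isUnit_cfc_rpow (hM : M.PosDef) (p : ℝ) : IsUnit (cfc (fun x : ℝ => x ^ p) M) := by
  refine (isUnit_cfc_iff _ M (M.finite_real_spectrum.continuousOn _) hM.1).mpr fun x hx => ?_
  exact (Real.rpow_pos_of_pos ((isStrictlyPositive_iff_posDef.mpr hM).spectrum_pos hx) p).ne'

theorem IsHermitian.trace_cfc (hM : M.IsHermitian) (f : ℝ → ℝ) :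
    (cfc f M).trace = ∑ i, (f (hM.eigenvalues i) : 𝕜) := by
  rw [hM.cfc_eq, IsHermitian.cfc, Unitary.conjStarAlgAut_apply, trace_mul_cycle,
    Unitary.coe_star_mul_self, one_mul, trace_diagonal]
  rfl

end Matrix

theorem matFun_eq_cfc {n : Type*} [Fintype n] [DecidableEq n] {M : Matrix n n ℂ}
    (hM : M.IsHermitian) (f : ℝ → ℝ) : matFun f M = cfc f M := by
  rw [hM.cfc_eq, Matrix.IsHermitian.cfc, Unitary.conjStarAlgAut_apply, matFun, dif_pos hM]
  rfl

section TraceRpow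

variable {n : Type*} [Fintype n] [DecidableEq n] {P Q M : Matrix n n ℂ} {α : ℝ}

theorem traceRpow_eq_re_trace_cfc (hM : M.IsHermitian) :
    traceRpow M α = ((cfc (fun x : ℝ => x ^ α) M).trace).re := by
  rw [hM.trace_cfc, Complex.re_sum, traceRpow, dif_pos hM]
  simp

theorem traceRpow_le_traceRpow (hP : P.PosSemidef) (hPQ : P ≤ Q) (hα : 0 ≤ α) :
    traceRpow P α ≤ traceRpow Q α := by
  have hQ : Q.PosSemidef := nonneg_iff_posSemidef.mp ((nonneg_iff_posSemidef.mpr hP).trans hPQ)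
  -- `x ^ α` is not monotone on negative reals, but all eigenvalues here are nonnegative.
  have hf : Monotone fun x : ℝ => max x 0 ^ α := fun a b hab =>
    Real.rpow_le_rpow (le_max_right a 0) (max_le_max_right 0 hab) hα
  have := hP.1.sum_comp_eigenvalues_le hQ.1 hPQ hf
  simp only [max_eq_left (hP.eigenvalues_nonneg _), max_eq_left (hQ.eigenvalues_nonneg _)] at this
  rwa [traceRpow, traceRpow, dif_pos hP.1, dif_pos hQ.1]

theorem traceRpow_smul (hM : M.PosSemidef) {c : ℝ} (hc : 0 ≤ c) :
    traceRpow (c • M) α = c ^ α * traceRpow M α := by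
  have hcM : (c • M).IsHermitian := hM.1.smul (IsSelfAdjoint.all c)
  have hscale : cfc (fun x : ℝ => x ^ α) (c • M) = c ^ α • cfc (fun x : ℝ => x ^ α) M :=
    calc _ = cfc (fun x : ℝ => (c * x) ^ α) M :=
          (cfc_comp_const_mul c _ M ((M.finite_real_spectrum.image _).continuousOn _) hM.1).symm
      _ = cfc (fun x : ℝ => c ^ α * x ^ α) M := cfc_congr fun x hx =>
          Real.mul_rpow hc (spectrum_nonneg_of_nonneg (nonneg_iff_posSemidef.mpr hM) hx)
      _ = _ := cfc_const_mul _ _ M (M.finite_real_spectrum.continuousOn _)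
  rw [traceRpow_eq_re_trace_cfc hcM, traceRpow_eq_re_trace_cfc hM.1, hscale, trace_smul,
    Complex.smul_re, smul_eq_mul]

theorem traceRpow_pos (hM : M.PosSemidef) (hM0 : M ≠ 0) : 0 < traceRpow M α := by
  obtain ⟨j, hj⟩ : ∃ j, hM.1.eigenvalues j ≠ 0 := by
    by_contra! h
    exact hM0 (hM.1.eigenvalues_eq_zero_iff.mp (funext h))
  rw [traceRpow, dif_pos hM.1]
  exact Finset.sum_pos' (fun i _ => Real.rpow_nonneg (hM.eigenvalues_nonneg i) α)
    ⟨j, Finset.mem_univ j, Real.rpow_pos_of_pos ((hM.eigenvalues_nonneg j).lt_of_ne' hj) α⟩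

theorem traceRpow_conj_le_rpow_mul {S ρ ρ' : Matrix n n ℂ} (hS : IsSelfAdjoint S)
    (hρ : ρ.PosSemidef) (hρ' : ρ'.PosSemidef) {γ : ℝ} (hγ : 0 ≤ γ) (hle : ρ ≤ γ • ρ')
    (hα : 0 ≤ α) : traceRpow (S * ρ * S) α ≤ γ ^ α * traceRpow (S * ρ' * S) α := by
  have hconj : S * ρ * S ≤ γ • (S * ρ' * S) := by
    simpa only [mul_smul_comm, smul_mul_assoc] using hS.conjugate_le_conjugate hle
  exact (traceRpow_le_traceRpow (hρ.mul_mul_of_isSelfAdjoint hS) hconj hα).trans_eq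
    (traceRpow_smul (hρ'.mul_mul_of_isSelfAdjoint hS) hγ)

end TraceRpow

/-- operator monotonicity bound for the sandwiched Rényi relative
entropy: `ρ ≤ γ ρ'` implies `D̃_α(ρ‖σ) ≤ (α/(α−1)) log γ + D̃_α(ρ'‖σ)`. -/
theorem sandRenyi_le_of_le_smul {n : Type*} [Fintype n] [DecidableEq n]
    (α γ : ℝ) (hα : 1 < α) (hγ : 1 ≤ γ)
    (ρ ρ' σ : Matrix n n ℂ) (hρ : IsDensity ρ) (hρ' : IsDensity ρ')
    (hσ : σ.PosDef) (hle : (γ • ρ' - ρ).PosSemidef) :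
    sandRenyi α ρ σ ≤ α / (α - 1) * Real.logb 2 γ + sandRenyi α ρ' σ := by
  have hγ0 : 0 < γ := by linarith
  rw [sandRenyi, sandRenyi, matFun_eq_cfc hσ.1]
  set S := cfc (fun x : ℝ => x ^ ((1 - α) / (2 * α))) σ
  have hS : IsSelfAdjoint S := cfc_predicate _ _
  have hA0 : S * ρ * S ≠ 0 := by
    have hS_unit : IsUnit S := hσ.isUnit_cfc_rpow _
    rw [Ne, hS_unit.mul_left_eq_zero, hS_unit.mul_right_eq_zero]
    rintro rfl
    simpa using hρ.2
  have hpos : 0 < traceRpow (S * ρ * S) α :=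
    traceRpow_pos (hρ.1.mul_mul_of_isSelfAdjoint hS) hA0
  have hmono : traceRpow (S * ρ * S) α ≤ γ ^ α * traceRpow (S * ρ' * S) α :=
    traceRpow_conj_le_rpow_mul hS hρ.1 hρ'.1 hγ0.le (le_iff.mpr hle) (by linarith)
  have hpos' : 0 < traceRpow (S * ρ' * S) α :=
    pos_of_mul_pos_right (hpos.trans_le hmono) (by positivity)
  calc (α - 1)⁻¹ * Real.logb 2 (traceRpow (S * ρ * S) α)
      ≤ (α - 1)⁻¹ * Real.logb 2 (γ ^ α * traceRpow (S * ρ' * S) α) :=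
        mul_le_mul_of_nonneg_left (Real.logb_le_logb_of_le one_lt_two hpos hmono)
          (inv_nonneg.mpr (by linarith))
    _ = α / (α - 1) * Real.logb 2 γ + (α - 1)⁻¹ * Real.logb 2 (traceRpow (S * ρ' * S) α) := by
        rw [Real.logb_mul (by positivity) hpos'.ne', Real.logb_rpow_eq_mul_logb_of_pos hγ0]
        ring
end

section
/- The tensor product of two PPT' operators is PPT': if τ₁ ∈ PPT'(A:B) and τ₂ ∈ PPT'(A':B'), then τ₁ ⊗ τ₂ ∈ PPT'(AA':BB'). -/
open scoped Matrix Kronecker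
open Matrix
open scoped ComplexOrder

/-!
Up to reordering the tensor factors, the partial transpose of `τ₁ ⊗ τ₂` is
`T_B(τ₁) ⊗ T_{B'}(τ₂)`. The trace norm of `M` is the trace of `|M| = √(Mᴴ M)`, and
`|M ⊗ N| = |M| ⊗ |N|` by uniqueness of positive square roots, so the trace norm is
multiplicative on Kronecker products and invariant under reindexing.
-/

open scoped MatrixOrder

lemma Matrix.trace_reindex {m n R : Type*} [Fintype m] [Fintype n] [AddCommMonoid R] (e : m ≃ n)
    (M : Matrix m m R) : (reindex e e M).trace = M.trace :=
  e.symm.sum_comp fun i => M i i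

section TraceNorm

variable {m n : Type*} [Fintype m] [Fintype n] [DecidableEq m] [DecidableEq n]

lemma ofReal_traceNorm (M : Matrix n n ℂ) : (traceNorm M : ℂ) = (CFC.abs M).trace := by
  have hM := posSemidef_conjTranspose_mul_self M
  have hU : star (hM.1.eigenvectorUnitary : Matrix n n ℂ) * hM.1.eigenvectorUnitary = 1 :=
    Unitary.star_mul_self_of_mem hM.1.eigenvectorUnitary.2
  rw [CFC.abs, star_eq_conjTranspose, CFC.sqrt_eq_cfc, cfc_nnreal_eq_real _ _ hM.nonneg,
    hM.1.cfc_eq, IsHermitian.cfc, Unitary.conjStarAlgAut_apply, trace_mul_cycle, hU, one_mul,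
    trace_diagonal, traceNorm]
  simp [max_eq_left (hM.eigenvalues_nonneg _)]

lemma cfcAbs_kronecker (M : Matrix m m ℂ) (N : Matrix n n ℂ) :
    CFC.abs (M ⊗ₖ N) = CFC.abs M ⊗ₖ CFC.abs N := by
  have hnonneg : 0 ≤ CFC.abs M ⊗ₖ CFC.abs N :=
    ((CFC.abs_nonneg M).posSemidef.kronecker (CFC.abs_nonneg N).posSemidef).nonneg
  rw [CFC.abs, CFC.sqrt_eq_iff _ _ (star_mul_self_nonneg _) hnonneg, ← mul_kronecker_mul,
    CFC.abs_mul_abs, CFC.abs_mul_abs]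
  simp only [star_eq_conjTranspose, conjTranspose_kronecker, mul_kronecker_mul]

lemma cfcAbs_reindex (e : m ≃ n) (M : Matrix m m ℂ) :
    CFC.abs (reindex e e M) = reindex e e (CFC.abs M) := by
  have hnonneg : 0 ≤ reindex e e (CFC.abs M) :=
    ((posSemidef_submatrix_equiv e.symm).mpr (CFC.abs_nonneg M).posSemidef).nonneg
  rw [CFC.abs, CFC.sqrt_eq_iff _ _ (star_mul_self_nonneg _) hnonneg]
  simp only [reindex_apply, star_eq_conjTranspose, conjTranspose_submatrix, submatrix_mul_equiv,
    CFC.abs_mul_abs]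

lemma traceNorm_kronecker (M : Matrix m m ℂ) (N : Matrix n n ℂ) :
    traceNorm (M ⊗ₖ N) = traceNorm M * traceNorm N :=
  Complex.ofReal_injective <| by
    simp only [Complex.ofReal_mul, ofReal_traceNorm, cfcAbs_kronecker, trace_kronecker]

lemma traceNorm_reindex (e : m ≃ n) (M : Matrix m m ℂ) :
    traceNorm (reindex e e M) = traceNorm M :=
  Complex.ofReal_injective <| by
    simp only [ofReal_traceNorm, cfcAbs_reindex, trace_reindex]

lemma traceNorm_nonneg (M : Matrix n n ℂ) : 0 ≤ traceNorm M :=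
  Finset.sum_nonneg fun _ _ => Real.sqrt_nonneg _

end TraceNorm

lemma partialTranspose_reindex_kronecker {A B A' B' : Type*}
    (τ₁ : Matrix (A × B) (A × B) ℂ) (τ₂ : Matrix (A' × B') (A' × B') ℂ) :
    partialTranspose (reindex (Equiv.prodProdProdComm A B A' B')
        (Equiv.prodProdProdComm A B A' B') (τ₁ ⊗ₖ τ₂)) =
      reindex (Equiv.prodProdProdComm A B A' B') (Equiv.prodProdProdComm A B A' B')
        (partialTranspose τ₁ ⊗ₖ partialTranspose τ₂) :=
  rfl

/-- the tensor product of two PPT' operators is PPT'. -/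
theorem pptPrime_kron {A B A' B' : Type*}
    [Fintype A] [Fintype B] [Fintype A'] [Fintype B']
    [DecidableEq A] [DecidableEq B] [DecidableEq A'] [DecidableEq B']
    (τ₁ : Matrix (A × B) (A × B) ℂ) (τ₂ : Matrix (A' × B') (A' × B') ℂ)
    (h₁ : τ₁ ∈ PPTprime A B) (h₂ : τ₂ ∈ PPTprime A' B') :
    Matrix.reindex (Equiv.prodProdProdComm A B A' B')
        (Equiv.prodProdProdComm A B A' B') (τ₁ ⊗ₖ τ₂) ∈
      PPTprime (A × A') (B × B') := by
  obtain ⟨hpos₁, hnorm₁⟩ := h₁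
  obtain ⟨hpos₂, hnorm₂⟩ := h₂
  refine ⟨(posSemidef_submatrix_equiv _).mpr (hpos₁.kronecker hpos₂), ?_⟩
  rw [partialTranspose_reindex_kronecker, traceNorm_reindex, traceNorm_kronecker]
  exact mul_le_one₀ hnorm₁ (traceNorm_nonneg _) hnorm₂
end
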